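/- For all positive integers α and β, the colength of the normalisation n_{α,β} of (x^α, y^β) is given by dim_ℂ ℂ[x,y]/n_{α,β} = (αβ + α + β − gcd(α,β))/2. -/

import Mathlib

/-!
A monomial `x^a y^b` has a power `(x^a y^b)^p` in `(x^α, y^β)^p` exactly when its weight
`aβ + bα` for the weight vector `(β, α)` is at least `αβ`: every monomial of `(x^α, y^β)^p` has
weight at least `pαβ`, and conversely, for `p = α`, `(x^a y^b)^α` is divisible by
`x^{α·min(a,α)} y^{β(α - min(a,α))} ∈ (x^α, y^β)^α`. So `n_{α,β}` is the monomial ideal of weight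
at least `αβ`, and the monomials of weight `< αβ` form a basis of the quotient. To count the
lattice points `(a, b)` with `aβ + bα < αβ`, note that they lie in the rectangle `[0,α] × [0,β]`,
whose point reflection `(a, b) ↦ (α - a, β - b)` exchanges them with the points of weight `> αβ`.
The remaining `gcd(α,β) + 1` points lie on the diagonal `aβ + bα = αβ`, so twice the count plus
`gcd(α,β) + 1` is `(α + 1)(β + 1)`.
-/

open MvPolynomial

/-- `n_{α,β}`: the normalisation of the ideal `(x^α, y^β) ⊆ ℂ[x,y]`, i.e. the monomial ideal
generated by all monomials `x^a y^b` such that `(x^a y^b)^p ∈ (x^α, y^β)^p` for some `p ≥ 1`. -/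
noncomputable def nIdeal (α β : ℕ) : Ideal (MvPolynomial (Fin 2) ℂ) :=
  Ideal.span {f : MvPolynomial (Fin 2) ℂ | ∃ a b : ℕ,
    f = X 0 ^ a * X 1 ^ b ∧
    ∃ p : ℕ, 1 ≤ p ∧
      ((X 0 : MvPolynomial (Fin 2) ℂ) ^ a * X 1 ^ b) ^ p ∈
        (Ideal.span {(X 0 : MvPolynomial (Fin 2) ℂ) ^ α, X 1 ^ β}) ^ p}

open Finset

theorem Finsupp.weight_mono {σ : Type*} (w : σ → ℕ) :
    Monotone (Finsupp.weight w : (σ →₀ ℕ) → ℕ) := by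
  intro u v huv
  obtain ⟨d, rfl⟩ := exists_add_of_le huv
  simp

namespace MvPolynomial

variable {σ R K : Type*}

section WeightIdeal

variable (R) [CommSemiring R]

noncomputable def weightIdeal (w : σ → ℕ) (n : ℕ) : Ideal (MvPolynomial σ R) :=
  Ideal.span ((monomial · 1) '' {u | n ≤ Finsupp.weight w u})

variable {R} {w : σ → ℕ}

theorem mem_weightIdeal_iff {n : ℕ} {f : MvPolynomial σ R} :
    f ∈ weightIdeal R w n ↔ ∀ u ∈ f.support, n ≤ Finsupp.weight w u := by
  rw [weightIdeal, mem_ideal_span_monomial_image]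
  exact forall₂_congr fun u _ =>
    ⟨fun ⟨v, hv, hvu⟩ => hv.trans (Finsupp.weight_mono w hvu), fun h => ⟨u, h, le_rfl⟩⟩

theorem monomial_one_mem_weightIdeal_iff [Nontrivial R] {n : ℕ} {u : σ →₀ ℕ} :
    monomial u (1 : R) ∈ weightIdeal R w n ↔ n ≤ Finsupp.weight w u := by
  classical
  simp [mem_weightIdeal_iff, support_monomial]

theorem weightIdeal_zero : weightIdeal R w 0 = ⊤ :=
  (Ideal.eq_top_iff_one _).mpr (Ideal.subset_span ⟨0, Nat.zero_le _, one_def.symm⟩)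

theorem weightIdeal_mul_le (m n : ℕ) :
    weightIdeal R w m * weightIdeal R w n ≤ weightIdeal R w (m + n) := by
  rw [weightIdeal, weightIdeal, Ideal.span_mul_span', Ideal.span_le]
  rintro _ ⟨_, ⟨u, hu, rfl⟩, _, ⟨v, hv, rfl⟩, rfl⟩
  simp only [monomial_mul, one_mul]
  exact Ideal.subset_span ⟨u + v, by simpa using add_le_add hu hv, rfl⟩

theorem weightIdeal_pow_le (n p : ℕ) : weightIdeal R w n ^ p ≤ weightIdeal R w (p * n) := by
  induction p with
  | zero => simp [weightIdeal_zero]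
  | succ p ih =>
    rw [pow_succ, Nat.succ_mul]
    exact (Ideal.mul_mono_left ih).trans (weightIdeal_mul_le _ _)

end WeightIdeal

section MonomialIdeal

variable [Field K]

theorem finrank_quotient_span_monomial_compl (s : Finset (σ →₀ ℕ))
    (hs : IsLowerSet (s : Set (σ →₀ ℕ))) :
    Module.finrank K
      (MvPolynomial σ K ⧸ Ideal.span ((monomial · (1 : K)) '' (s : Set (σ →₀ ℕ))ᶜ)) = #s := by
  classical
  set J := Ideal.span ((monomial · (1 : K)) '' (s : Set (σ →₀ ℕ))ᶜ)
  let coeffs : MvPolynomial σ K →ₗ[K] (s → K) := LinearMap.pi fun u => lcoeff K u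
  have hsurj : Function.Surjective coeffs := by
    intro c
    refine ⟨∑ u : s, monomial u (c u), ?_⟩
    ext v
    simp only [coeffs, LinearMap.pi_apply, lcoeff_apply, coeff_sum, coeff_monomial,
      Subtype.coe_inj, sum_ite_eq', mem_univ, if_true]
  have hker : LinearMap.ker coeffs = J.restrictScalars K := by
    ext f
    simp only [LinearMap.mem_ker, Submodule.restrictScalars_mem, J, mem_ideal_span_monomial_image]
    constructor
    · intro hf u hu
      refine ⟨u, fun hus => mem_support_iff.mp hu ?_, le_rfl⟩
      exact congrFun hf ⟨u, hus⟩
    · intro hf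
      ext ⟨u, hus⟩
      by_contra hne
      obtain ⟨v, hv, hvu⟩ := hf u (mem_support_iff.mpr hne)
      exact hs.compl hvu hv hus
  let e : (MvPolynomial σ K ⧸ J) ≃ₗ[K] (s → K) :=
    ((Submodule.Quotient.restrictScalarsEquiv K J).symm.trans
      (Submodule.quotEquivOfEq _ _ hker.symm)).trans (coeffs.quotKerEquivOfSurjective hsurj)
  rw [e.finrank_eq, Module.finrank_fintype_fun_eq_card, Fintype.card_coe]

theorem finrank_quotient_weightIdeal {w : σ → ℕ} {n : ℕ} (s : Finset (σ →₀ ℕ))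
    (hs : ∀ u, u ∈ s ↔ Finsupp.weight w u < n) :
    Module.finrank K (MvPolynomial σ K ⧸ weightIdeal K w n) = #s := by
  have hcompl : {u | n ≤ Finsupp.weight w u} = (s : Set (σ →₀ ℕ))ᶜ := by
    ext u
    simp [hs]
  have hlower : IsLowerSet (s : Set (σ →₀ ℕ)) := fun u v hvu hu =>
    (hs v).2 ((Finsupp.weight_mono w hvu).trans_lt ((hs u).1 hu))
  rw [weightIdeal, hcompl, finrank_quotient_span_monomial_compl s hlower]

end MonomialIdeal

section FinTwo

variable [CommSemiring R] {α β : ℕ}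

theorem weight_fin_two (u : Fin 2 →₀ ℕ) :
    Finsupp.weight ![β, α] u = u 0 * β + u 1 * α := by
  simp [Finsupp.weight_eq_sum]

theorem X_pow_mul_X_pow_eq_monomial (a b : ℕ) :
    (X 0 ^ a * X 1 ^ b : MvPolynomial (Fin 2) R) =
      monomial ((finTwoArrowEquiv' ℕ).symm (a, b)) 1 := by
  simp [monomial_fin_two]

theorem span_X_pow_pair_pow_le_weightIdeal (p : ℕ) :
    Ideal.span {(X 0 : MvPolynomial (Fin 2) R) ^ α, X 1 ^ β} ^ p ≤
      weightIdeal R ![β, α] (p * (α * β)) := by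
  refine (Ideal.pow_right_mono ?_ p).trans (weightIdeal_pow_le _ p)
  rw [Ideal.span_le, Set.insert_subset_iff, Set.singleton_subset_iff, X_pow_eq_monomial,
    X_pow_eq_monomial]
  exact ⟨Ideal.subset_span ⟨_, by simp [weight_fin_two], rfl⟩,
    Ideal.subset_span ⟨_, by simp [weight_fin_two, mul_comm], rfl⟩⟩

theorem X_pow_mul_X_pow_pow_mem {a b : ℕ} (h : α * β ≤ a * β + b * α) :
    (X 0 ^ a * X 1 ^ b : MvPolynomial (Fin 2) R) ^ α ∈
      Ideal.span {(X 0 : MvPolynomial (Fin 2) R) ^ α, X 1 ^ β} ^ α := by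
  set I := Ideal.span {(X 0 : MvPolynomial (Fin 2) R) ^ α, X 1 ^ β}
  set i := min a α
  have hmem : (X 0 ^ α) ^ i * (X 1 ^ β) ^ (α - i) ∈ I ^ α := by
    have hx : X 0 ^ α ∈ I := Ideal.subset_span (by simp)
    have hy : X 1 ^ β ∈ I := Ideal.subset_span (by simp)
    have := Ideal.mul_mem_mul (Ideal.pow_mem_pow hx i) (Ideal.pow_mem_pow hy (α - i))
    rwa [← pow_add, Nat.add_sub_cancel' (min_le_right a α)] at this
  refine Ideal.mem_of_dvd _ ?_ hmem
  rw [mul_pow, ← pow_mul, ← pow_mul, ← pow_mul, ← pow_mul]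
  refine mul_dvd_mul (pow_dvd_pow _ ?_) (pow_dvd_pow _ ?_)
  · rw [mul_comm]
    exact Nat.mul_le_mul_right α (min_le_left a α)
  · rcases le_total a α with ha | ha
    · obtain ⟨c, rfl⟩ := Nat.exists_eq_add_of_le ha
      simp only [i, min_eq_left ha, Nat.add_sub_cancel_left]
      nlinarith
    · simp [i, min_eq_right ha]

end FinTwo

end MvPolynomial

theorem Finset.card_filter_lt_add_card_filter_eq_add_card_filter_gt {ι α : Type*} [LinearOrder α]
    (s : Finset ι) (f : ι → α) (a : α) :
    #{x ∈ s | f x < a} + #{x ∈ s | f x = a} + #{x ∈ s | a < f x} = #s := by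
  rw [← card_filter_add_card_filter_not (s := s) (fun x => f x < a),
    ← card_filter_add_card_filter_not (s := {x ∈ s | ¬f x < a}) (fun x => f x = a),
    filter_filter, filter_filter, add_assoc]
  congr 3 <;> refine filter_congr fun x _ => ?_ <;> grind

section LatticePoints

variable (α β : ℕ)

def staircase : Finset (ℕ × ℕ) := {q ∈ Iic α ×ˢ Iic β | q.1 * β + q.2 * α < α * β}

theorem mem_staircase_iff {q : ℕ × ℕ} : q ∈ staircase α β ↔ q.1 * β + q.2 * α < α * β := by
  refine ⟨fun hq => (mem_filter.mp hq).2, fun hq => mem_filter.mpr ⟨?_, hq⟩⟩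
  rw [mem_product, mem_Iic, mem_Iic]
  constructor
  · by_contra! h
    nlinarith [Nat.mul_le_mul_right β h.le]
  · by_contra! h
    nlinarith [Nat.mul_le_mul_right α h.le]

theorem card_staircase_eq_card_filter_gt :
    #(staircase α β) = #{q ∈ Iic α ×ˢ Iic β | α * β < q.1 * β + q.2 * α} := by
  have hreflect {a b : ℕ} (ha : a ≤ α) (hb : b ≤ β) :
      (α - a) * β + (β - b) * α + (a * β + b * α) = 2 * (α * β) := by
    obtain ⟨c, rfl⟩ := Nat.exists_eq_add_of_le ha
    obtain ⟨d, rfl⟩ := Nat.exists_eq_add_of_le hb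
    simp only [Nat.add_sub_cancel_left]
    ring
  refine card_nbij' (fun q => (α - q.1, β - q.2)) (fun q => (α - q.1, β - q.2)) ?_ ?_ ?_ ?_ <;>
    rintro ⟨a, b⟩ hq <;>
    simp only [staircase, coe_filter, Set.mem_ofPred_eq, mem_product, mem_Iic, Prod.mk.injEq]
      at hq ⊢ <;>
    have := hreflect hq.1.1 hq.1.2 <;>
    omega

theorem card_filter_eq_of_coprime {A B : ℕ} (g : ℕ) (hA : 0 < A) (hAB : A.Coprime B) :
    #{q ∈ Iic (A * g) ×ˢ Iic (B * g) | q.1 * B + q.2 * A = A * B * g} = g + 1 := by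
  rw [← Nat.card_Iic g]
  symm
  refine card_nbij' (fun k => (k * A, (g - k) * B)) (fun q => q.1 / A) ?_ ?_ ?_ ?_
  · intro k hk
    simp only [coe_Iic, Set.mem_Iic, coe_filter, mem_product, mem_Iic, Set.mem_ofPred_eq] at hk ⊢
    obtain ⟨c, rfl⟩ := Nat.exists_eq_add_of_le hk
    simp only [Nat.add_sub_cancel_left]
    exact ⟨⟨by nlinarith, by nlinarith⟩, by ring⟩
  · rintro ⟨a, b⟩ hq
    simp only [coe_Iic, Set.mem_Iic, coe_filter, mem_product, mem_Iic, Set.mem_ofPred_eq] at hq ⊢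
    exact Nat.div_le_of_le_mul (by linarith [hq.1.1])
  · intro k _
    simp [Nat.mul_div_cancel k hA]
  · rintro ⟨a, b⟩ hq
    simp only [coe_filter, mem_product, mem_Iic, Set.mem_ofPred_eq] at hq
    obtain ⟨⟨ha, hb⟩, hline⟩ := hq
    have hdvd : A ∣ a * B := by
      rw [← Nat.dvd_add_left (dvd_mul_left A b), hline, mul_assoc]
      exact dvd_mul_right A _
    obtain ⟨k, rfl⟩ := hAB.dvd_of_dvd_mul_right hdvd
    have hkb : k * B + b = g * B := by
      apply Nat.eq_of_mul_eq_mul_left hA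
      linarith
    simp only [Nat.mul_div_cancel_left k hA, Prod.mk.injEq, Nat.sub_mul]
    exact ⟨mul_comm k A, by omega⟩

theorem card_filter_eq_gcd_add_one (hα : 0 < α) :
    #{q ∈ Iic α ×ˢ Iic β | q.1 * β + q.2 * α = α * β} = Nat.gcd α β + 1 := by
  obtain ⟨A, B, hAB, hαA, hβB⟩ := Nat.exists_coprime α β
  have hg : 0 < Nat.gcd α β := Nat.gcd_pos_of_pos_left β hα
  generalize Nat.gcd α β = g at *
  subst hαA hβB
  rw [← card_filter_eq_of_coprime g (Nat.pos_of_mul_pos_right hα) hAB]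
  congr 1
  refine filter_congr fun q _ => ?_
  rw [show q.1 * (B * g) + q.2 * (A * g) = (q.1 * B + q.2 * A) * g by ring,
    show A * g * (B * g) = A * B * g * g by ring, Nat.mul_left_inj hg.ne']

theorem two_mul_card_staircase_add_gcd (hα : 0 < α) :
    2 * #(staircase α β) + Nat.gcd α β = α * β + α + β := by
  have htri := card_filter_lt_add_card_filter_eq_add_card_filter_gt (Iic α ×ˢ Iic β)
    (fun q => q.1 * β + q.2 * α) (α * β)
  rw [card_filter_eq_gcd_add_one α β hα, ← card_staircase_eq_card_filter_gt, card_product,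
    Nat.card_Iic, Nat.card_Iic] at htri
  unfold staircase at *
  linarith

end LatticePoints

theorem nIdeal_eq_weightIdeal {α β : ℕ} (hα : 0 < α) :
    nIdeal α β = weightIdeal ℂ ![β, α] (α * β) := by
  apply le_antisymm
  · rw [nIdeal, Ideal.span_le]
    rintro _ ⟨a, b, rfl, p, hp, hmem⟩
    have hweight := span_X_pow_pair_pow_le_weightIdeal p hmem
    rw [X_pow_mul_X_pow_eq_monomial, monomial_pow, one_pow, monomial_one_mem_weightIdeal_iff,
      map_nsmul, smul_eq_mul] at hweight
    rw [X_pow_mul_X_pow_eq_monomial, SetLike.mem_coe, monomial_one_mem_weightIdeal_iff]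
    exact Nat.le_of_mul_le_mul_left hweight hp
  · rw [weightIdeal, Ideal.span_le]
    rintro _ ⟨u, hu, rfl⟩
    refine Ideal.subset_span ⟨u 0, u 1, by simp [monomial_fin_two], α, hα, ?_⟩
    exact X_pow_mul_X_pow_pow_mem (by simpa [weight_fin_two] using hu)

theorem mem_map_staircase_iff {α β : ℕ} {u : Fin 2 →₀ ℕ} :
    u ∈ (staircase α β).map (finTwoArrowEquiv' ℕ).symm.toEmbedding ↔
      Finsupp.weight ![β, α] u < α * β := by
  rw [mem_map_equiv, Equiv.symm_symm, mem_staircase_iff, weight_fin_two]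
  rfl

theorem colength_nIdeal_general (α β : ℕ) (hα : 0 < α) :
    Module.finrank ℂ (MvPolynomial (Fin 2) ℂ ⧸ nIdeal α β) =
      (α * β + α + β - Nat.gcd α β) / 2 := by
  rw [nIdeal_eq_weightIdeal hα, finrank_quotient_weightIdeal _ fun u => mem_map_staircase_iff,
    card_map]
  have := two_mul_card_staircase_add_gcd α β hα
  omega

/-- **Colength of `n_{α,β}`.** For positive integers `α, β`, the colength of the
normalisation of `(x^α, y^β)` is `(αβ + α + β − gcd(α,β))/2`. -/
theorem colength_nIdeal (α β : ℕ) (hα : 0 < α) (hβ : 0 < β) :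
    Module.finrank ℂ (MvPolynomial (Fin 2) ℂ ⧸ nIdeal α β) =
      (α * β + α + β - Nat.gcd α β) / 2 :=
  colength_nIdeal_general α β hα
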